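/- The logistic L₂E loss L is globally Lipschitz continuous on ℝ^{p+1} with Lipschitz constant σ₁/(2√n), where σ₁ is the operator (largest singular value) norm of X̃; that is, |L(θ) − L(θ′)| ≤ (σ₁/(2√n))·‖θ − θ′‖₂ for all θ, θ′ ∈ ℝ^{p+1}. -/

import Mathlib

open Finset

/-- The logistic function `F(u) = 1/(1 + exp(-u))`. -/
noncomputable def logisticF (u : ℝ) : ℝ := 1 / (1 + Real.exp (-u))

/-- The logistic L₂E loss `L(θ) = (1/n)∑ᵢ (yᵢ − F(x̃ᵢᵀθ))²` on Euclidean space. -/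
noncomputable def L2Eloss {n p : ℕ} (X : Matrix (Fin n) (Fin (p+1)) ℝ)
    (y : Fin n → ℝ) (θ : EuclideanSpace ℝ (Fin (p+1))) : ℝ :=
  (1/(n:ℝ)) * ∑ i, (y i - logisticF (∑ j, X i j * θ j))^2

/-- The largest singular value (Euclidean operator norm) of a matrix. -/
noncomputable def sigma1 {n m : ℕ} (X : Matrix (Fin n) (Fin m) ℝ) : ℝ :=
  ‖LinearMap.toContinuousLinearMap (Matrix.toEuclideanLin X)‖

/-
Write `η = X̃ (θ - θ')`. The logistic function takes values in `(0, 1)` and is `1/4`-Lipschitz,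
since its derivative `F (1 - F)` never exceeds `1/4`; as `yᵢ ∈ {0, 1}`, each summand of the loss
therefore moves by at most `2 · |ηᵢ| / 4`. Summing, `|L(θ) - L(θ')| ≤ (1/(2n)) ∑ᵢ |ηᵢ|`, and
Cauchy–Schwarz together with the operator norm give `∑ᵢ |ηᵢ| ≤ √n ‖η‖ ≤ √n σ₁ ‖θ - θ'‖`.
-/
lemma logisticF_eq_sigmoid : logisticF = Real.sigmoid :=
  funext fun x => by rw [logisticF, one_div, Real.sigmoid_def]

lemma lipschitzWith_sigmoid : LipschitzWith (1 / 4) Real.sigmoid := by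
  refine lipschitzWith_of_nnnorm_deriv_le differentiable_sigmoid fun x => ?_
  have h0 := Real.sigmoid_pos x
  have h1 := Real.sigmoid_lt_one x
  rw [Real.deriv_sigmoid, ← NNReal.coe_le_coe, coe_nnnorm, Real.norm_eq_abs,
    abs_of_nonneg (by nlinarith)]
  push_cast
  nlinarith [sq_nonneg (Real.sigmoid x - 1 / 2)]

lemma abs_sub_sigmoid_le (a b : ℝ) : |Real.sigmoid a - Real.sigmoid b| ≤ |a - b| / 4 := by
  simpa [Real.dist_eq, div_eq_inv_mul] using lipschitzWith_sigmoid.dist_le_mul a b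

lemma abs_sub_sq_sub_sub_sq_le {y a b : ℝ} (hy : y ∈ Set.Icc 0 1) (ha : a ∈ Set.Icc 0 1)
    (hb : b ∈ Set.Icc 0 1) : |(y - a) ^ 2 - (y - b) ^ 2| ≤ 2 * |a - b| := by
  have hfactor : (y - a) ^ 2 - (y - b) ^ 2 = (2 * y - a - b) * (b - a) := by ring
  rw [hfactor, abs_mul, abs_sub_comm b a]
  have hbound : |2 * y - a - b| ≤ 2 :=
    abs_le.2 ⟨by linarith [hy.1, ha.2, hb.2], by linarith [hy.2, ha.1, hb.1]⟩
  exact mul_le_mul_of_nonneg_right hbound (abs_nonneg _)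

lemma abs_sub_sigmoid_sq_sub_le {y : ℝ} (hy : y ∈ Set.Icc 0 1) (u v : ℝ) :
    |(y - Real.sigmoid u) ^ 2 - (y - Real.sigmoid v) ^ 2| ≤ |u - v| / 2 :=
  calc |(y - Real.sigmoid u) ^ 2 - (y - Real.sigmoid v) ^ 2|
      ≤ 2 * |Real.sigmoid u - Real.sigmoid v| :=
        abs_sub_sq_sub_sub_sq_le hy ⟨Real.sigmoid_nonneg u, Real.sigmoid_le_one u⟩
          ⟨Real.sigmoid_nonneg v, Real.sigmoid_le_one v⟩
    _ ≤ 2 * (|u - v| / 4) := by gcongr; exact abs_sub_sigmoid_le u v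
    _ = |u - v| / 2 := by ring

lemma sum_abs_le_sqrt_card_mul_norm {ι : Type*} [Fintype ι] (v : EuclideanSpace ℝ ι) :
    ∑ i, |v i| ≤ √(Fintype.card ι) * ‖v‖ := by
  have hCS := sq_sum_le_card_mul_sum_sq (s := univ) (f := fun i => |v i|)
  simp only [card_univ, sq_abs] at hCS
  rw [EuclideanSpace.norm_eq, ← Real.sqrt_mul (Nat.cast_nonneg _)]
  refine Real.le_sqrt_of_sq_le (hCS.trans_eq ?_)
  simp only [Real.norm_eq_abs, sq_abs]

lemma norm_toEuclideanLin_le_sigma1 {n m : ℕ} (X : Matrix (Fin n) (Fin m) ℝ)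
    (v : EuclideanSpace ℝ (Fin m)) : ‖Matrix.toEuclideanLin X v‖ ≤ sigma1 X * ‖v‖ :=
  (LinearMap.toContinuousLinearMap (Matrix.toEuclideanLin X)).le_opNorm v

lemma L2Eloss_eq {n p : ℕ} (X : Matrix (Fin n) (Fin (p + 1)) ℝ) (y : Fin n → ℝ)
    (θ : EuclideanSpace ℝ (Fin (p + 1))) :
    L2Eloss X y θ =
      (n : ℝ)⁻¹ * ∑ i, (y i - Real.sigmoid (Matrix.toEuclideanLin X θ i)) ^ 2 := by
  rw [L2Eloss, logisticF_eq_sigmoid, one_div]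
  rfl

lemma abs_L2Eloss_sub_le {n p : ℕ} (X : Matrix (Fin n) (Fin (p + 1)) ℝ) {y : Fin n → ℝ}
    (hy : ∀ i, y i ∈ Set.Icc 0 1) (θ θ' : EuclideanSpace ℝ (Fin (p + 1))) :
    |L2Eloss X y θ - L2Eloss X y θ'|
      ≤ (2 * n : ℝ)⁻¹ * ∑ i, |Matrix.toEuclideanLin X (θ - θ') i| := by
  rw [L2Eloss_eq, L2Eloss_eq, ← mul_sub, ← sum_sub_distrib, abs_mul,
    abs_of_nonneg (by positivity), mul_inv, mul_comm (2 : ℝ)⁻¹, mul_assoc, mul_sum]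
  gcongr
  refine (abs_sum_le_sum_abs _ _).trans (sum_le_sum fun i _ => ?_)
  rw [map_sub, PiLp.sub_apply, inv_mul_eq_div]
  exact abs_sub_sigmoid_sq_sub_le (hy i) _ _

theorem stmt_8_general (n p : ℕ)
    (X : Matrix (Fin n) (Fin (p+1)) ℝ) (y : Fin n → ℝ)
    (hy : ∀ i, y i = 0 ∨ y i = 1) :
    ∀ θ θ' : EuclideanSpace ℝ (Fin (p+1)),
      |L2Eloss X y θ - L2Eloss X y θ'| ≤ (sigma1 X / (2 * Real.sqrt n)) * ‖θ - θ'‖ := by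
  intro θ θ'
  have hy01 : ∀ i, y i ∈ Set.Icc (0 : ℝ) 1 := fun i => by
    rcases hy i with h | h <;> simp [h]
  have hη : ∑ i, |Matrix.toEuclideanLin X (θ - θ') i| ≤ √n * (sigma1 X * ‖θ - θ'‖) := by
    refine (sum_abs_le_sqrt_card_mul_norm _).trans ?_
    rw [Fintype.card_fin]
    gcongr
    exact norm_toEuclideanLin_le_sigma1 X _
  calc |L2Eloss X y θ - L2Eloss X y θ'|
      ≤ (2 * n : ℝ)⁻¹ * ∑ i, |Matrix.toEuclideanLin X (θ - θ') i| :=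
        abs_L2Eloss_sub_le X hy01 θ θ'
    _ ≤ (2 * n : ℝ)⁻¹ * (√n * (sigma1 X * ‖θ - θ'‖)) := by gcongr
    _ = ((n : ℝ)⁻¹ * √n) * sigma1 X / 2 * ‖θ - θ'‖ := by ring
    _ = (sigma1 X / (2 * √n)) * ‖θ - θ'‖ := by
        rw [inv_mul_eq_div, Real.sqrt_div_self]
        ring

/-- the logistic L₂E loss is globally Lipschitz with constant `σ₁/(2√n)`. -/
theorem stmt_8 (n p : ℕ) (hn : 0 < n)
    (X : Matrix (Fin n) (Fin (p+1)) ℝ) (y : Fin n → ℝ)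
    (hy : ∀ i, y i = 0 ∨ y i = 1) :
    ∀ θ θ' : EuclideanSpace ℝ (Fin (p+1)),
      |L2Eloss X y θ - L2Eloss X y θ'| ≤ (sigma1 X / (2 * Real.sqrt n)) * ‖θ - θ'‖ :=
  stmt_8_general n p X y hy
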